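/- Let (X, X̃) be a Cauchy pair on V. Then there exists a nonzero bilinear form ⟨·,·⟩ on V such that ⟨Xu, v⟩ = ⟨u, Xv⟩ and ⟨X̃u, v⟩ = ⟨u, X̃v⟩ for all u, v ∈ V; moreover, this form is unique up to multiplication by a nonzero scalar of K. -/

import Mathlib

/-!
Write `X - X̃ = f ⊗ w` with `f` a nonzero functional and `w ≠ 0`. A line spanned by an
eigenvector of `X` in `ker f` is invariant under both maps, so `f` vanishes on no eigenvector;
hence every eigenspace of `X` is a line. In an eigenbasis `(bᵢ)`, the hyperplane `{wᵢ = 0}` is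
invariant under both maps when `wᵢ = 0`, so all coordinates of `w` are nonzero (in particular
the eigenbasis is finite). An `X`-invariant form is diagonal in this basis, with entries `dᵢ`,
and given that, `X̃`-invariance amounts to `f u · B(w, v) = f v · B(u, w)`, i.e. to
`dᵢ wᵢ / f(bᵢ)` being independent of `i`. So the invariant forms are the multiples of
`Σᵢ f(bᵢ) / wᵢ · uᵢ vᵢ`.
-/

def IsCauchyPair (K V : Type*) [Field K] [AddCommGroup V] [Module K V]
    (X Xt : Module.End K V) : Prop :=
  (⨆ μ : K, X.eigenspace μ) = ⊤ ∧
  (⨆ μ : K, Xt.eigenspace μ) = ⊤ ∧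
  Module.rank K (LinearMap.range (X - Xt)) = 1 ∧
  ∀ W : Submodule K V, W.map (X : V →ₗ[K] V) ≤ W → W.map (Xt : V →ₗ[K] V) ≤ W →
    W = ⊥ ∨ W = ⊤

universe u v

section

variable {K : Type u} {V : Type v} [Field K] [AddCommGroup V] [Module K V]

theorem LinearMap.exists_eq_smulRight_of_rank_range_eq_one {W : Type*} [AddCommGroup W]
    [Module K W] {T : V →ₗ[K] W} (hT : Module.rank K (LinearMap.range T) = 1) :
    ∃ (f : V →ₗ[K] K) (w : W), f ≠ 0 ∧ w ≠ 0 ∧ T = f.smulRight w := by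
  have hR : Module.finrank K (LinearMap.range T) = 1 :=
    Module.finrank_eq_of_rank_eq (by rw [hT, Nat.cast_one])
  set b := Module.basisUnique Unit hR
  obtain ⟨v, hv⟩ := LinearMap.mem_range.mp (b ()).2
  refine ⟨b.coord () ∘ₗ T.rangeRestrict, b (), fun hf => ?_,
    by simpa using b.ne_zero (), ?_⟩
  · have : (b.coord () ∘ₗ T.rangeRestrict) v = 1 := by
      simp [show T.rangeRestrict v = b () from Subtype.ext hv]
    simp [hf] at this
  · ext u
    have := congrArg Subtype.val (b.sum_repr (T.rangeRestrict u))
    simpa using this.symm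

theorem LinearMap.IsSelfAdjoint.apply_eq_zero_of_eigenvalues_ne {X : Module.End K V}
    {B : V →ₗ[K] V →ₗ[K] K} (hB : B.IsSelfAdjoint X) {u v : V} {μ ν : K}
    (hu : X u = μ • u) (hv : X v = ν • v) (hμν : μ ≠ ν) : B u v = 0 := by
  have h : (μ - ν) * B u v = 0 := by
    rw [sub_mul, sub_eq_zero]
    simpa [hu, hv] using hB u v
  exact (mul_eq_zero.mp h).resolve_left (sub_ne_zero.mpr hμν)

theorem LinearMap.IsSelfAdjoint.isSelfAdjoint_sub_iff {X Y : Module.End K V}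
    {B : V →ₗ[K] V →ₗ[K] K} (hB : B.IsSelfAdjoint X) :
    B.IsSelfAdjoint ⇑(X - Y) ↔ B.IsSelfAdjoint Y := by
  simp [LinearMap.IsSelfAdjoint, LinearMap.IsAdjointPair, hB _ _]

theorem LinearMap.isSelfAdjoint_smulRight_iff {B : V →ₗ[K] V →ₗ[K] K} {f : V →ₗ[K] K}
    {w : V} :
    B.IsSelfAdjoint (f.smulRight w) ↔ ∀ u v, f u * B w v = f v * B u w := by
  simp [LinearMap.IsSelfAdjoint, LinearMap.IsAdjointPair]

theorem Module.End.exists_basis_eigenvectors_of_iSup_eigenspace_eq_top {X : Module.End K V}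
    (hX : ⨆ μ, X.eigenspace μ = ⊤) :
    ∃ (ι : Type (max u v)) (b : Module.Basis ι K V) (ev : ι → K),
      ∀ i, X (b i) = ev i • b i := by
  classical
  have hint : DirectSum.IsInternal X.eigenspace :=
    (DirectSum.isInternal_submodule_iff_iSupIndep_and_iSup_eq_top _).mpr
      ⟨X.eigenspaces_iSupIndep, hX⟩
  exact ⟨_, hint.collectedBasis fun μ => Module.Basis.ofVectorSpace K _, Sigma.fst,
    fun i => Module.End.mem_eigenspace_iff.mp (hint.collectedBasis_mem _ i)⟩

namespace Module.Basis

variable {ι : Type*} (b : Module.Basis ι K V) {X : Module.End K V} {ev : ι → K}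

theorem finite_index_of_repr_ne_zero {w : V} (hw : ∀ i, b.repr w i ≠ 0) : Finite ι :=
  Set.finite_univ_iff.mp <| (b.repr w).support.finite_toSet.subset fun i _ =>
    Finsupp.mem_support_iff.mpr (hw i)

theorem repr_apply_of_eigenbasis (hXb : ∀ i, X (b i) = ev i • b i) (u : V) (i : ι) :
    b.repr (X u) i = ev i * b.repr u i := by
  have : b.coord i ∘ₗ X = ev i • b.coord i :=
    b.ext fun j => by
      by_cases hij : j = i
      · subst hij; simp [hXb]
      · simp [hXb, hij]
  exact LinearMap.congr_fun this u

theorem injective_of_eigenbasis {f : V →ₗ[K] K} (hXb : ∀ i, X (b i) = ev i • b i)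
    (hf : ∀ (v : V) (μ : K), X v = μ • v → f v = 0 → v = 0) : Function.Injective ev := by
  intro i j hij
  by_contra hne
  set v := f (b j) • b i - f (b i) • b j
  have hv : X v = ev i • v := by simp [v, hXb, hij, smul_sub, smul_comm (ev j)]
  have hfv : f v = 0 := by simp [v, mul_comm]
  have hfbj : f (b j) = 0 := by
    simpa [v, Finsupp.single_apply, Ne.symm hne] using congrArg (b.repr · i) (hf v _ hv hfv)
  exact b.ne_zero j (hf _ _ (hXb j) hfbj)

variable [Fintype ι] [DecidableEq ι]

theorem toBilin_diagonal_apply (d : ι → K) (u v : V) :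
    Matrix.toBilin b (Matrix.diagonal d) u v = ∑ i, b.repr u i * d i * b.repr v i := by
  simp [Matrix.diagonal_apply]

theorem isSelfAdjoint_toBilin_diagonal (hXb : ∀ i, X (b i) = ev i • b i) (d : ι → K) :
    (Matrix.toBilin b (Matrix.diagonal d)).IsSelfAdjoint X := fun u v => by
  simp only [toBilin_diagonal_apply, b.repr_apply_of_eigenbasis hXb]
  exact Finset.sum_congr rfl fun i _ => by ring

theorem eq_toBilin_diagonal_of_isSelfAdjoint (hXb : ∀ i, X (b i) = ev i • b i)
    (hev : Function.Injective ev) {B : V →ₗ[K] V →ₗ[K] K} (hB : B.IsSelfAdjoint X) :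
    B = Matrix.toBilin b (Matrix.diagonal fun i => B (b i) (b i)) := by
  refine LinearMap.BilinForm.ext_basis b fun i j => ?_
  rw [toBilin_diagonal_apply]
  by_cases hij : i = j
  · subst hij; simp [Finsupp.single_apply]
  · simp [Finsupp.single_apply, hij,
      hB.apply_eq_zero_of_eigenvalues_ne (hXb i) (hXb j) (hev.ne hij)]

noncomputable def cauchyForm (f : V →ₗ[K] K) (w : V) : V →ₗ[K] V →ₗ[K] K :=
  Matrix.toBilin b (Matrix.diagonal fun i => f (b i) / b.repr w i)

variable {b} {f : V →ₗ[K] K} {w : V}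

theorem cauchyForm_apply_left (hw : ∀ i, b.repr w i ≠ 0) (v : V) :
    b.cauchyForm f w w v = f v := by
  conv_rhs => rw [← b.sum_dual_apply_smul_coord f]
  simp only [cauchyForm, toBilin_diagonal_apply, LinearMap.sum_apply, LinearMap.smul_apply,
    coord_apply, smul_eq_mul]
  exact Finset.sum_congr rfl fun i _ => by field_simp [hw i]

theorem cauchyForm_apply_right (hw : ∀ i, b.repr w i ≠ 0) (u : V) :
    b.cauchyForm f w u w = f u := by
  rw [← cauchyForm_apply_left hw u]
  simp only [cauchyForm, toBilin_diagonal_apply]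
  exact Finset.sum_congr rfl fun i _ => by ring

theorem cauchyForm_ne_zero (hw : ∀ i, b.repr w i ≠ 0) (hf : f ≠ 0) : b.cauchyForm f w ≠ 0 :=
  fun h => hf (LinearMap.ext fun v => by rw [← cauchyForm_apply_left hw v, h]; rfl)

theorem isSelfAdjoint_cauchyForm (hXb : ∀ i, X (b i) = ev i • b i) :
    (b.cauchyForm f w).IsSelfAdjoint X :=
  b.isSelfAdjoint_toBilin_diagonal hXb _

theorem isSelfAdjoint_cauchyForm_sub_smulRight (hXb : ∀ i, X (b i) = ev i • b i)
    (hw : ∀ i, b.repr w i ≠ 0) : (b.cauchyForm f w).IsSelfAdjoint ⇑(X - f.smulRight w) := by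
  rw [(isSelfAdjoint_cauchyForm hXb).isSelfAdjoint_sub_iff, LinearMap.isSelfAdjoint_smulRight_iff]
  intro u v
  rw [cauchyForm_apply_left hw, cauchyForm_apply_right hw, mul_comm]

theorem eq_smul_cauchyForm_of_isSelfAdjoint [Nonempty ι] (hXb : ∀ i, X (b i) = ev i • b i)
    (hev : Function.Injective ev) (hfb : ∀ i, f (b i) ≠ 0) (hw : ∀ i, b.repr w i ≠ 0)
    {B : V →ₗ[K] V →ₗ[K] K} (hX : B.IsSelfAdjoint X)
    (hXt : B.IsSelfAdjoint ⇑(X - f.smulRight w)) :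
    ∃ κ : K, B = κ • b.cauchyForm f w := by
  obtain ⟨d, rfl⟩ : ∃ d, B = Matrix.toBilin b (Matrix.diagonal d) :=
    ⟨_, b.eq_toBilin_diagonal_of_isSelfAdjoint hXb hev hX⟩
  have hrel : ∀ i j, f (b i) * (b.repr w j * d j) = f (b j) * (b.repr w i * d i) := fun i j => by
    simpa [-Matrix.toBilin_apply, toBilin_diagonal_apply, Finsupp.single_apply, mul_comm] using
      LinearMap.isSelfAdjoint_smulRight_iff.mp (hX.isSelfAdjoint_sub_iff.mp hXt) (b i) (b j)
  obtain ⟨i₀⟩ := ‹Nonempty ι›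
  refine ⟨d i₀ * b.repr w i₀ / f (b i₀), ?_⟩
  rw [cauchyForm, ← map_smul, ← Matrix.diagonal_smul]
  congr 2
  funext j
  rw [Pi.smul_apply, smul_eq_mul]
  field_simp [hfb i₀, hw j]
  linear_combination hrel i₀ j

end Module.Basis

def IsIrreduciblePair (X Y : Module.End K V) : Prop :=
  ∀ W : Submodule K V, W.map X ≤ W → W.map Y ≤ W → W = ⊥ ∨ W = ⊤

namespace IsIrreduciblePair

variable {X : Module.End K V} {f : V →ₗ[K] K} {w : V}

theorem eq_zero_of_eigenvector_of_apply_eq_zero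
    (hirr : IsIrreduciblePair X (X - f.smulRight w)) (hf : f ≠ 0) {v : V} {μ : K}
    (hv : X v = μ • v) (hfv : f v = 0) : v = 0 := by
  have hXv : (K ∙ v).map X ≤ K ∙ v := by
    rw [Submodule.map_span_le]
    simp [hv, Submodule.smul_mem _ _ (Submodule.mem_span_singleton_self v)]
  have hXtv : (K ∙ v).map (X - f.smulRight w) ≤ K ∙ v := by
    rw [Submodule.map_span_le]
    simp [hv, hfv, Submodule.smul_mem _ _ (Submodule.mem_span_singleton_self v)]
  rcases hirr _ hXv hXtv with hbot | htop
  · exact Submodule.span_singleton_eq_bot.mp hbot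
  · refine absurd (LinearMap.ker_eq_top.mp ?_) hf
    rw [eq_top_iff, ← htop, Submodule.span_singleton_le_iff_mem]
    exact hfv

theorem repr_ne_zero {ι : Type*} {b : Module.Basis ι K V} {ev : ι → K}
    (hirr : IsIrreduciblePair X (X - f.smulRight w)) (hw : w ≠ 0)
    (hXb : ∀ i, X (b i) = ev i • b i) (i : ι) : b.repr w i ≠ 0 := by
  intro hwi
  have hX : (LinearMap.ker (b.coord i)).map X ≤ LinearMap.ker (b.coord i) := by
    rw [Submodule.map_le_iff_le_comap]
    intro u hu
    simp_all [b.repr_apply_of_eigenbasis hXb]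
  have hXt :
      (LinearMap.ker (b.coord i)).map (X - f.smulRight w) ≤ LinearMap.ker (b.coord i) := by
    rw [Submodule.map_le_iff_le_comap]
    intro u hu
    simp_all [b.repr_apply_of_eigenbasis hXb]
  rcases hirr _ hX hXt with hbot | htop
  · exact hw ((Submodule.eq_bot_iff _).mp hbot w hwi)
  · simpa using LinearMap.congr_fun (LinearMap.ker_eq_top.mp htop) (b i)

end IsIrreduciblePair

end

theorem stmt16_general {K V : Type*} [Field K] [AddCommGroup V] [Module K V]
    {X Xt : Module.End K V} (h : IsCauchyPair K V X Xt) :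
    ∃ B : V →ₗ[K] V →ₗ[K] K, B ≠ 0 ∧
      (∀ u v : V, B (X u) v = B u (X v)) ∧
      (∀ u v : V, B (Xt u) v = B u (Xt v)) ∧
      ∀ B' : V →ₗ[K] V →ₗ[K] K, B' ≠ 0 →
        (∀ u v : V, B' (X u) v = B' u (X v)) →
        (∀ u v : V, B' (Xt u) v = B' u (Xt v)) →
        ∃ c : K, c ≠ 0 ∧ B' = c • B := by
  classical
  obtain ⟨hXdiag, -, hrank, hirr⟩ := h
  obtain ⟨f, w, hf, hw, hXXt⟩ := LinearMap.exists_eq_smulRight_of_rank_range_eq_one hrank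
  obtain rfl : Xt = X - f.smulRight w := by rw [← hXXt, sub_sub_cancel]
  obtain ⟨ι, b, ev, hXb⟩ :=
    Module.End.exists_basis_eigenvectors_of_iSup_eigenspace_eq_top hXdiag
  have hwb := IsIrreduciblePair.repr_ne_zero hirr hw hXb
  have hker : ∀ (v : V) (μ : K), X v = μ • v → f v = 0 → v = 0 := fun _ _ =>
    IsIrreduciblePair.eq_zero_of_eigenvector_of_apply_eq_zero hirr hf
  have hfb : ∀ i, f (b i) ≠ 0 := fun i hi => b.ne_zero i (hker _ _ (hXb i) hi)
  have : Fintype ι := @Fintype.ofFinite _ (b.finite_index_of_repr_ne_zero hwb)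
  have := nontrivial_of_ne w 0 hw
  have : Nonempty ι := b.index_nonempty
  refine ⟨b.cauchyForm f w, Module.Basis.cauchyForm_ne_zero hwb hf,
    Module.Basis.isSelfAdjoint_cauchyForm hXb,
    Module.Basis.isSelfAdjoint_cauchyForm_sub_smulRight hXb hwb, fun B' hB' hX hXt => ?_⟩
  obtain ⟨κ, rfl⟩ := b.eq_smul_cauchyForm_of_isSelfAdjoint hXb
    (b.injective_of_eigenbasis hXb hker) hfb hwb hX hXt
  exact ⟨κ, by rintro rfl; exact hB' (zero_smul K _), rfl⟩

theorem stmt16 {K V : Type*} [Field K] [AddCommGroup V] [Module K V] [FiniteDimensional K V]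
    {X Xt : Module.End K V} (h : IsCauchyPair K V X Xt) :
    ∃ B : V →ₗ[K] V →ₗ[K] K, B ≠ 0 ∧
      (∀ u v : V, B (X u) v = B u (X v)) ∧
      (∀ u v : V, B (Xt u) v = B u (Xt v)) ∧
      ∀ B' : V →ₗ[K] V →ₗ[K] K, B' ≠ 0 →
        (∀ u v : V, B' (X u) v = B' u (X v)) →
        (∀ u v : V, B' (Xt u) v = B' u (Xt v)) →
        ∃ c : K, c ≠ 0 ∧ B' = c • B :=
  stmt16_general h
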